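/- Let N ≥ 1, let δ_{−1}, δ_0, …, δ_{N+1} be real parameters, and let U_N(x) = Σ_{i=−1}^{N+1} δ_i·CTB_i(x). Then U_N is differentiable and for every m with 0 ≤ m ≤ N, U_N'(x_m) = β₁·δ_{m−1} + β₂·δ_{m+1}, where β₁ = −(3/4)·csc(3h/2) and β₂ = (3/4)·csc(3h/2). -/

import Mathlib

/-- The knot `x_j = a + j·h` of a uniform partition. -/
noncomputable def knot (h a : ℝ) (j : ℤ) : ℝ := a + (j : ℝ) * h

/-- The cubic trigonometric B-spline `CTB_i` over the uniform knots `x_j = a + j·h`,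
built from `ω_j(x) = sin((x − x_j)/2)`, `φ_j(x) = sin((x_j − x)/2)` and
`θ = sin(h/2)·sin(h)·sin(3h/2)`. -/
noncomputable def CTB (h a : ℝ) (i : ℤ) (x : ℝ) : ℝ :=
  let ω : ℤ → ℝ := fun j => Real.sin ((x - knot h a j) / 2)
  let φ : ℤ → ℝ := fun j => Real.sin ((knot h a j - x) / 2)
  let θ : ℝ := Real.sin (h / 2) * Real.sin h * Real.sin (3 * h / 2)
  if knot h a (i - 2) ≤ x ∧ x ≤ knot h a (i - 1) then
    (ω (i - 2)) ^ 3 / θ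
  else if knot h a (i - 1) ≤ x ∧ x ≤ knot h a i then
    (ω (i - 2) * (ω (i - 2) * φ i + φ (i + 1) * ω (i - 1)) + φ (i + 2) * (ω (i - 1)) ^ 2) / θ
  else if knot h a i ≤ x ∧ x ≤ knot h a (i + 1) then
    (ω (i - 2) * (φ (i + 1)) ^ 2 + φ (i + 2) * (ω (i - 1) * φ (i + 1) + φ (i + 2) * ω i)) / θ
  else if knot h a (i + 1) ≤ x ∧ x ≤ knot h a (i + 2) then
    (φ (i + 2)) ^ 3 / θ
  else 0

/-! On each cell `[x_k, x_{k+1}]` the spline `CTB_i` coincides with one of its four trigonometric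
pieces or with `0`. Neighbouring pieces agree in value and in derivative at their common knot (a
direct evaluation that needs only `sin h = 2 sin (h/2) cos (h/2)`), so gluing one-sided
derivatives makes `CTB_i` differentiable. At the knots its derivative vanishes except at `x_{i∓1}`, where
differentiating `ω_{i-2}³/θ` (resp. `φ_{i+2}³/θ`) gives `±(3/4) csc (3h/2)`; in `U_N'(x_m)` only
the terms `i = m ± 1` survive. -/

open Real Set Filter

theorem Real.sin_eq_two_mul_sin_half_mul_cos_half (x : ℝ) :
    sin x = 2 * sin (x / 2) * cos (x / 2) := by
  rw [← sin_two_mul, mul_div_cancel₀ x two_ne_zero]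

theorem hasDerivAt_of_eqOn_Icc_of_eqOn_Icc {F f g : ℝ → ℝ} {c b e d : ℝ} (hcb : c < b)
    (hbe : b < e) (hf : EqOn F f (Icc c b)) (hg : EqOn F g (Icc b e)) (hf' : HasDerivAt f d b)
    (hg' : HasDerivAt g d b) : HasDerivAt F d b := by
  have hl : HasDerivWithinAt F d (Iic b) b :=
    hf'.hasDerivWithinAt.congr_of_eventuallyEq (eventuallyEq_of_mem (Icc_mem_nhdsLE hcb) hf)
      (hf ⟨hcb.le, le_rfl⟩)
  have hr : HasDerivWithinAt F d (Ici b) b :=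
    hg'.hasDerivWithinAt.congr_of_eventuallyEq (eventuallyEq_of_mem (Icc_mem_nhdsGE hbe) hg)
      (hg ⟨le_rfl, hbe.le⟩)
  simpa [Iic_union_Ici] using hl.union hr

section Knots

variable {h : ℝ} (a : ℝ)

theorem knot_strictMono (hh : 0 < h) : StrictMono (knot h a) := fun j k hjk => by
  unfold knot
  gcongr

theorem exists_knot_le_lt_knot_succ (hh : 0 < h) (x : ℝ) :
    ∃ k : ℤ, knot h a k ≤ x ∧ x < knot h a (k + 1) := by
  refine ⟨⌊(x - a) / h⌋, ?_, ?_⟩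
  · have := (le_div_iff₀ hh).1 (Int.floor_le ((x - a) / h))
    simp only [knot]; linarith
  · have := (div_lt_iff₀ hh).1 (Int.lt_floor_add_one ((x - a) / h))
    simp only [knot]; push_cast; linarith

theorem knot_sub_knot_div_two (m j : ℤ) :
    (knot h a m - knot h a j) / 2 = ((m - j : ℤ) : ℝ) * (h / 2) := by
  simp only [knot]; push_cast; ring

variable {a} {F : ℝ → ℝ} {P : ℤ → ℝ → ℝ}

theorem hasDerivAt_knot_of_eqOn_Icc (hh : 0 < h)
    (hF : ∀ k, EqOn F (P k) (Icc (knot h a k) (knot h a (k + 1))))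
    (hP : ∀ k, Differentiable ℝ (P k))
    (hP' : ∀ k, deriv (P (k - 1)) (knot h a k) = deriv (P k) (knot h a k)) (k : ℤ) :
    HasDerivAt F (deriv (P k) (knot h a k)) (knot h a k) := by
  refine hasDerivAt_of_eqOn_Icc_of_eqOn_Icc (knot_strictMono a hh (sub_one_lt k))
    (knot_strictMono a hh (lt_add_one k)) (by simpa using hF (k - 1)) (hF k) ?_
    (hP k _).hasDerivAt
  rw [← hP' k]
  exact (hP (k - 1) _).hasDerivAt

theorem differentiable_of_eqOn_Icc (hh : 0 < h)
    (hF : ∀ k, EqOn F (P k) (Icc (knot h a k) (knot h a (k + 1))))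
    (hP : ∀ k, Differentiable ℝ (P k))
    (hP' : ∀ k, deriv (P (k - 1)) (knot h a k) = deriv (P k) (knot h a k)) :
    Differentiable ℝ F := by
  intro x
  obtain ⟨k, hkx, hxk⟩ := exists_knot_le_lt_knot_succ a hh x
  rcases hkx.eq_or_lt with rfl | hkx
  · exact (hasDerivAt_knot_of_eqOn_Icc hh hF hP hP' k).differentiableAt
  · exact (hP k x).congr_of_eventuallyEq (eventuallyEq_of_mem (Icc_mem_nhds hkx hxk) (hF k))

end Knots

noncomputable section

namespace CTB

variable (h a : ℝ)

def ω (j : ℤ) (x : ℝ) : ℝ := sin ((x - knot h a j) / 2)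
def φ (j : ℤ) (x : ℝ) : ℝ := sin ((knot h a j - x) / 2)
def θ : ℝ := sin (h / 2) * sin h * sin (3 * h / 2)

def piece₁ (i : ℤ) (x : ℝ) : ℝ := ω h a (i - 2) x ^ 3 / θ h

def piece₂ (i : ℤ) (x : ℝ) : ℝ :=
  (ω h a (i - 2) x * (ω h a (i - 2) x * φ h a i x + φ h a (i + 1) x * ω h a (i - 1) x) +
    φ h a (i + 2) x * ω h a (i - 1) x ^ 2) / θ h

def piece₃ (i : ℤ) (x : ℝ) : ℝ :=
  (ω h a (i - 2) x * φ h a (i + 1) x ^ 2 +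
    φ h a (i + 2) x * (ω h a (i - 1) x * φ h a (i + 1) x + φ h a (i + 2) x * ω h a i x)) / θ h

def piece₄ (i : ℤ) (x : ℝ) : ℝ := φ h a (i + 2) x ^ 3 / θ h

variable {h a}

theorem apply_eq_ite (i : ℤ) (x : ℝ) :
    CTB h a i x =
      if knot h a (i - 2) ≤ x ∧ x ≤ knot h a (i - 1) then piece₁ h a i x
      else if knot h a (i - 1) ≤ x ∧ x ≤ knot h a i then piece₂ h a i x
      else if knot h a i ≤ x ∧ x ≤ knot h a (i + 1) then piece₃ h a i x
      else if knot h a (i + 1) ≤ x ∧ x ≤ knot h a (i + 2) then piece₄ h a i x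
      else 0 :=
  rfl

variable (i : ℤ)

theorem piece₁_knot_sub_two : piece₁ h a i (knot h a (i - 2)) = 0 := by
  simp [piece₁, ω]

theorem piece₁_knot_sub_one :
    piece₁ h a i (knot h a (i - 1)) = piece₂ h a i (knot h a (i - 1)) := by
  simp [piece₁, piece₂, ω, φ, knot_sub_knot_div_two]
  ring

theorem piece₂_knot : piece₂ h a i (knot h a i) = piece₃ h a i (knot h a i) := by
  simp [piece₃, piece₂, ω, φ, knot_sub_knot_div_two]
  ring

theorem piece₃_knot_add_one :
    piece₃ h a i (knot h a (i + 1)) = piece₄ h a i (knot h a (i + 1)) := by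
  simp [piece₃, piece₄, ω, φ, knot_sub_knot_div_two]
  ring

theorem piece₄_knot_add_two : piece₄ h a i (knot h a (i + 2)) = 0 := by
  simp [piece₄, φ]

theorem deriv_piece₁_knot_sub_two : deriv (piece₁ h a i) (knot h a (i - 2)) = 0 := by
  unfold piece₁ ω
  simp (disch := fun_prop)

theorem deriv_piece₂_knot_sub_one :
    deriv (piece₂ h a i) (knot h a (i - 1)) = deriv (piece₁ h a i) (knot h a (i - 1)) := by
  unfold piece₁ piece₂ ω φ
  simp (disch := fun_prop) [knot_sub_knot_div_two, sin_two_mul]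
  ring

theorem deriv_piece₂_knot : deriv (piece₂ h a i) (knot h a i) = 0 := by
  unfold piece₂ ω φ
  rw [deriv_div_const, div_eq_zero_iff]
  left
  simp (disch := fun_prop) [knot_sub_knot_div_two, sin_two_mul]
  ring

theorem deriv_piece₃_knot : deriv (piece₃ h a i) (knot h a i) = 0 := by
  unfold piece₃ ω φ
  rw [deriv_div_const, div_eq_zero_iff]
  left
  simp (disch := fun_prop) [knot_sub_knot_div_two, sin_two_mul]
  ring

theorem deriv_piece₃_knot_add_one :
    deriv (piece₃ h a i) (knot h a (i + 1)) = deriv (piece₄ h a i) (knot h a (i + 1)) := by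
  unfold piece₃ piece₄ ω φ
  simp (disch := fun_prop) [knot_sub_knot_div_two, sin_two_mul]
  ring

theorem deriv_piece₄_knot_add_two : deriv (piece₄ h a i) (knot h a (i + 2)) = 0 := by
  unfold piece₄ φ
  simp (disch := fun_prop)

theorem deriv_piece₁_knot_sub_one (hθ : θ h ≠ 0) :
    deriv (piece₁ h a i) (knot h a (i - 1)) = 3 / 4 * (sin (3 * h / 2))⁻¹ := by
  have hS : sin (3 * h / 2) ≠ 0 := right_ne_zero_of_mul hθ
  unfold piece₁ ω
  rw [deriv_div_const, div_eq_iff hθ, θ]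
  simp (disch := fun_prop) [knot_sub_knot_div_two]
  field_simp
  linear_combination (-2 * sin (h / 2)) * sin_eq_two_mul_sin_half_mul_cos_half h

theorem deriv_piece₄_knot_add_one (hθ : θ h ≠ 0) :
    deriv (piece₄ h a i) (knot h a (i + 1)) = -(3 / 4) * (sin (3 * h / 2))⁻¹ := by
  have hS : sin (3 * h / 2) ≠ 0 := right_ne_zero_of_mul hθ
  unfold piece₄ φ
  rw [deriv_div_const, div_eq_iff hθ, θ]
  simp (disch := fun_prop) [knot_sub_knot_div_two]
  field_simp
  linear_combination (2 * sin (h / 2)) * sin_eq_two_mul_sin_half_mul_cos_half h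

theorem eqOn_piece₁ :
    EqOn (CTB h a i) (piece₁ h a i) (Icc (knot h a (i - 2)) (knot h a (i - 1))) :=
  fun x hx => by rw [apply_eq_ite, if_pos (mem_Icc.1 hx)]

theorem eqOn_piece₂ (hh : 0 < h) :
    EqOn (CTB h a i) (piece₂ h a i) (Icc (knot h a (i - 1)) (knot h a i)) := by
  rintro x ⟨hx₁, hx₂⟩
  have k₁ := knot_strictMono a hh (show i - 2 < i - 1 by omega)
  rcases hx₁.eq_or_lt with rfl | hx₁
  · rw [apply_eq_ite, if_pos ⟨k₁.le, le_rfl⟩, piece₁_knot_sub_one]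
  · rw [apply_eq_ite, if_neg (not_and_of_not_right _ hx₁.not_ge), if_pos ⟨hx₁.le, hx₂⟩]

theorem eqOn_piece₃ (hh : 0 < h) :
    EqOn (CTB h a i) (piece₃ h a i) (Icc (knot h a i) (knot h a (i + 1))) := by
  rintro x ⟨hx₁, hx₂⟩
  have k₂ := knot_strictMono a hh (show i - 1 < i by omega)
  rcases hx₁.eq_or_lt with rfl | hx₁
  · rw [apply_eq_ite, if_neg (not_and_of_not_right _ k₂.not_ge), if_pos ⟨k₂.le, le_rfl⟩,
      piece₂_knot]
  · rw [apply_eq_ite, if_neg (not_and_of_not_right _ (k₂.trans hx₁).not_ge),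
      if_neg (not_and_of_not_right _ hx₁.not_ge), if_pos ⟨hx₁.le, hx₂⟩]

theorem eqOn_piece₄ (hh : 0 < h) :
    EqOn (CTB h a i) (piece₄ h a i) (Icc (knot h a (i + 1)) (knot h a (i + 2))) := by
  rintro x ⟨hx₁, hx₂⟩
  have k₂ := knot_strictMono a hh (show i - 1 < i + 1 by omega)
  have k₃ := knot_strictMono a hh (show i < i + 1 by omega)
  rcases hx₁.eq_or_lt with rfl | hx₁
  · rw [apply_eq_ite, if_neg (not_and_of_not_right _ k₂.not_ge),
      if_neg (not_and_of_not_right _ k₃.not_ge), if_pos ⟨k₃.le, le_rfl⟩, piece₃_knot_add_one]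
  · rw [apply_eq_ite, if_neg (not_and_of_not_right _ (k₂.trans hx₁).not_ge),
      if_neg (not_and_of_not_right _ (k₃.trans hx₁).not_ge),
      if_neg (not_and_of_not_right _ hx₁.not_ge), if_pos ⟨hx₁.le, hx₂⟩]

theorem eqOn_zero_of_le (hh : 0 < h) : EqOn (CTB h a i) 0 (Iic (knot h a (i - 2))) := by
  intro x hx
  have k₁ := knot_strictMono a hh (show i - 2 < i - 1 by omega)
  rcases (mem_Iic.1 hx).eq_or_lt with rfl | hx
  · rw [apply_eq_ite, if_pos ⟨le_rfl, k₁.le⟩, piece₁_knot_sub_two, Pi.zero_apply]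
  · have k₂ := knot_strictMono a hh (show i - 2 < i by omega)
    have k₃ := knot_strictMono a hh (show i - 2 < i + 1 by omega)
    rw [apply_eq_ite, if_neg (not_and_of_not_left _ hx.not_ge),
      if_neg (not_and_of_not_left _ (hx.trans k₁).not_ge),
      if_neg (not_and_of_not_left _ (hx.trans k₂).not_ge),
      if_neg (not_and_of_not_left _ (hx.trans k₃).not_ge), Pi.zero_apply]

theorem eqOn_zero_of_ge (hh : 0 < h) : EqOn (CTB h a i) 0 (Ici (knot h a (i + 2))) := by
  intro x hx
  have k₁ := knot_strictMono a hh (show i - 1 < i + 2 by omega)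
  have k₂ := knot_strictMono a hh (show i < i + 2 by omega)
  have k₃ := knot_strictMono a hh (show i + 1 < i + 2 by omega)
  rcases (mem_Ici.1 hx).eq_or_lt with rfl | hx
  · rw [apply_eq_ite, if_neg (not_and_of_not_right _ k₁.not_ge),
      if_neg (not_and_of_not_right _ k₂.not_ge), if_neg (not_and_of_not_right _ k₃.not_ge),
      if_pos ⟨k₃.le, le_rfl⟩, piece₄_knot_add_two, Pi.zero_apply]
  · rw [apply_eq_ite, if_neg (not_and_of_not_right _ (k₁.trans hx).not_ge),
      if_neg (not_and_of_not_right _ (k₂.trans hx).not_ge),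
      if_neg (not_and_of_not_right _ (k₃.trans hx).not_ge),
      if_neg (not_and_of_not_right _ hx.not_ge), Pi.zero_apply]

variable (h a) in
def cellPiece (i k : ℤ) : ℝ → ℝ :=
  if k = i - 2 then piece₁ h a i
  else if k = i - 1 then piece₂ h a i
  else if k = i then piece₃ h a i
  else if k = i + 1 then piece₄ h a i
  else 0

variable {i} {k : ℤ}

theorem cellPiece_eq_piece₁ (hk : k = i - 2) : cellPiece h a i k = piece₁ h a i := by
  rw [cellPiece, if_pos hk]

theorem cellPiece_eq_piece₂ (hk : k = i - 1) : cellPiece h a i k = piece₂ h a i := by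
  rw [cellPiece, if_neg (by omega), if_pos hk]

theorem cellPiece_eq_piece₃ (hk : k = i) : cellPiece h a i k = piece₃ h a i := by
  rw [cellPiece, if_neg (by omega), if_neg (by omega), if_pos hk]

theorem cellPiece_eq_piece₄ (hk : k = i + 1) : cellPiece h a i k = piece₄ h a i := by
  rw [cellPiece, if_neg (by omega), if_neg (by omega), if_neg (by omega), if_pos hk]

theorem cellPiece_eq_zero (hk : k < i - 2 ∨ i + 1 < k) : cellPiece h a i k = 0 := by
  rw [cellPiece, if_neg (by omega), if_neg (by omega), if_neg (by omega), if_neg (by omega)]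

theorem differentiable_cellPiece (i k : ℤ) : Differentiable ℝ (cellPiece h a i k) := by
  unfold cellPiece piece₁ piece₂ piece₃ piece₄ ω φ
  split_ifs <;> fun_prop

theorem eqOn_cellPiece (hh : 0 < h) (i k : ℤ) :
    EqOn (CTB h a i) (cellPiece h a i k) (Icc (knot h a k) (knot h a (k + 1))) := by
  rcases (show k < i - 2 ∨ k = i - 2 ∨ k = i - 1 ∨ k = i ∨ k = i + 1 ∨ i + 1 < k by omega)
    with hk | rfl | rfl | hk | rfl | hk
  · rw [cellPiece_eq_zero (.inl hk)]
    exact (eqOn_zero_of_le i hh).mono (Icc_subset_Iic_self.trans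
      (Iic_subset_Iic.2 ((knot_strictMono a hh).monotone (by omega))))
  · rw [cellPiece_eq_piece₁ rfl, show i - 2 + 1 = i - 1 by ring]
    exact eqOn_piece₁ i
  · rw [cellPiece_eq_piece₂ rfl, sub_add_cancel]
    exact eqOn_piece₂ i hh
  · rw [cellPiece_eq_piece₃ hk, hk]
    exact eqOn_piece₃ i hh
  · rw [cellPiece_eq_piece₄ rfl, add_assoc]
    exact eqOn_piece₄ i hh
  · rw [cellPiece_eq_zero (.inr hk)]
    exact (eqOn_zero_of_ge i hh).mono (Icc_subset_Ici_self.trans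
      (Ici_subset_Ici.2 ((knot_strictMono a hh).monotone (by omega))))

theorem deriv_cellPiece_pred_knot (i k : ℤ) :
    deriv (cellPiece h a i (k - 1)) (knot h a k) = deriv (cellPiece h a i k) (knot h a k) := by
  rcases (show k < i - 2 ∨ k = i - 2 ∨ k = i - 1 ∨ k = i ∨ k = i + 1 ∨ k = i + 2 ∨ i + 2 < k by
    omega) with hk | rfl | rfl | hk | rfl | rfl | hk
  · rw [cellPiece_eq_zero (by omega), cellPiece_eq_zero (by omega)]
  · rw [cellPiece_eq_zero (by omega), cellPiece_eq_piece₁ rfl, deriv_piece₁_knot_sub_two,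
      deriv_zero, Pi.zero_apply]
  · rw [cellPiece_eq_piece₁ (by ring), cellPiece_eq_piece₂ rfl, deriv_piece₂_knot_sub_one]
  · rw [cellPiece_eq_piece₂ (by omega), cellPiece_eq_piece₃ hk, hk, deriv_piece₂_knot,
      deriv_piece₃_knot]
  · rw [cellPiece_eq_piece₃ (by ring), cellPiece_eq_piece₄ rfl, deriv_piece₃_knot_add_one]
  · rw [cellPiece_eq_piece₄ (by ring), cellPiece_eq_zero (by omega), deriv_piece₄_knot_add_two,
      deriv_zero, Pi.zero_apply]
  · rw [cellPiece_eq_zero (by omega), cellPiece_eq_zero (by omega)]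

theorem differentiable_CTB (hh : 0 < h) (i : ℤ) : Differentiable ℝ (CTB h a i) :=
  differentiable_of_eqOn_Icc hh (eqOn_cellPiece hh i) (differentiable_cellPiece i)
    (deriv_cellPiece_pred_knot i)

variable (h) in
def nodalSlope (n : ℤ) : ℝ :=
  if n = 1 then 3 / 4 * (sin (3 * h / 2))⁻¹
  else if n = -1 then -(3 / 4) * (sin (3 * h / 2))⁻¹
  else 0

theorem nodalSlope_eq_zero {n : ℤ} (h₁ : n ≠ 1) (h₂ : n ≠ -1) : nodalSlope h n = 0 := by
  rw [nodalSlope, if_neg h₁, if_neg h₂]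

theorem deriv_cellPiece_knot (hθ : θ h ≠ 0) (i k : ℤ) :
    deriv (cellPiece h a i k) (knot h a k) = nodalSlope h (i - k) := by
  rcases (show k < i - 2 ∨ k = i - 2 ∨ k = i - 1 ∨ k = i ∨ k = i + 1 ∨ i + 1 < k by omega)
    with hk | rfl | rfl | hk | rfl | hk
  · rw [cellPiece_eq_zero (.inl hk), nodalSlope_eq_zero (by omega) (by omega), deriv_zero,
      Pi.zero_apply]
  · rw [cellPiece_eq_piece₁ rfl, deriv_piece₁_knot_sub_two,
      nodalSlope_eq_zero (by omega) (by omega)]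
  · rw [cellPiece_eq_piece₂ rfl, deriv_piece₂_knot_sub_one, deriv_piece₁_knot_sub_one i hθ,
      sub_sub_cancel, nodalSlope, if_pos rfl]
  · rw [cellPiece_eq_piece₃ hk, hk, deriv_piece₃_knot, nodalSlope_eq_zero (by omega) (by omega)]
  · rw [cellPiece_eq_piece₄ rfl, deriv_piece₄_knot_add_one i hθ, sub_add_cancel_left, nodalSlope,
      if_neg (by omega), if_pos rfl]
  · rw [cellPiece_eq_zero (.inr hk), nodalSlope_eq_zero (by omega) (by omega), deriv_zero,
      Pi.zero_apply]

theorem hasDerivAt_CTB_knot (hh : 0 < h) (hθ : θ h ≠ 0) (i m : ℤ) :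
    HasDerivAt (CTB h a i) (nodalSlope h (i - m)) (knot h a m) := by
  rw [← deriv_cellPiece_knot hθ i m]
  exact hasDerivAt_knot_of_eqOn_Icc hh (eqOn_cellPiece hh i) (differentiable_cellPiece i)
    (deriv_cellPiece_pred_knot i) m

theorem θ_ne_zero (hh : 0 < h) (hh' : h < 2 * π / 3) : θ h ≠ 0 := by
  have h₁ : 0 < sin (h / 2) := sin_pos_of_pos_of_lt_pi (by positivity) (by linarith [pi_pos])
  have h₂ : 0 < sin h := sin_pos_of_pos_of_lt_pi hh (by linarith [pi_pos])
  have h₃ : 0 < sin (3 * h / 2) := sin_pos_of_pos_of_lt_pi (by positivity) (by linarith)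
  exact (mul_pos (mul_pos h₁ h₂) h₃).ne'

end CTB

end

theorem spline_expansion_nodal_deriv_general (h a : ℝ) (hh : 0 < h) (hh' : h < 2 * Real.pi / 3)
    (N : ℕ) (δ : ℤ → ℝ) (U : ℝ → ℝ)
    (hU : U = fun x => ∑ i ∈ Finset.Icc (-1 : ℤ) ((N : ℤ) + 1), δ i * CTB h a i x) :
    Differentiable ℝ U ∧
    ∀ m : ℤ, 0 ≤ m → m ≤ (N : ℤ) →
      deriv U (knot h a m) =
        (-(3 / 4) * (Real.sin (3 * h / 2))⁻¹) * δ (m - 1) +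
        (3 / 4 * (Real.sin (3 * h / 2))⁻¹) * δ (m + 1) := by
  subst hU
  refine ⟨Differentiable.fun_sum fun i _ => (CTB.differentiable_CTB hh i).const_mul (δ i),
    fun m hm₀ hmN => ?_⟩
  have hU' := HasDerivAt.fun_sum fun i (_ : i ∈ Finset.Icc (-1 : ℤ) (N + 1)) =>
    (CTB.hasDerivAt_CTB_knot (a := a) hh (CTB.θ_ne_zero hh hh') i m).const_mul (δ i)
  rw [hU'.deriv, Finset.sum_eq_add (m - 1) (m + 1) (by omega)]
  · simp [CTB.nodalSlope]
    ring
  · intro i _ hi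
    rw [CTB.nodalSlope_eq_zero (by omega) (by omega), mul_zero]
  all_goals exact fun hm => absurd (Finset.mem_Icc.2 ⟨by omega, by omega⟩) hm

/-- The spline expansion `U_N = Σ_{i=−1}^{N+1} δ_i·CTB_i` is differentiable and
`U_N'(x_m) = β₁δ_{m−1} + β₂δ_{m+1}` with `β₁ = −(3/4)csc(3h/2)`,
`β₂ = (3/4)csc(3h/2)`, for `0 ≤ m ≤ N`. -/
theorem spline_expansion_nodal_deriv (h a : ℝ) (hh : 0 < h) (hh' : h < 2 * Real.pi / 3)
    (N : ℕ) (hN : 1 ≤ N) (δ : ℤ → ℝ) (U : ℝ → ℝ)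
    (hU : U = fun x => ∑ i ∈ Finset.Icc (-1 : ℤ) ((N : ℤ) + 1), δ i * CTB h a i x) :
    Differentiable ℝ U ∧
    ∀ m : ℤ, 0 ≤ m → m ≤ (N : ℤ) →
      deriv U (knot h a m) =
        (-(3 / 4) * (Real.sin (3 * h / 2))⁻¹) * δ (m - 1) +
        (3 / 4 * (Real.sin (3 * h / 2))⁻¹) * δ (m + 1) :=
  spline_expansion_nodal_deriv_general h a hh hh' N δ U hU
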